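/- For S ∈ CC(X), the multiplication satisfies μ(S) = conv( ⋃_{Φ ∈ UB(S)} { Σ_{U ∈ supp Φ} Φ(U)·d : d ∈ UB(U) } ), i.e., μ(S) is generated by combining the unique bases at both levels. -/

import Mathlib

def IsDist {X : Type*} (d : X →₀ ℝ) : Prop :=
  (∀ x, 0 ≤ d x) ∧ d.sum (fun _ v => v) = 1

def IsBase {V : Type*} [AddCommGroup V] [Module ℝ V] (S B : Set V) : Prop :=
  B.Finite ∧ S = convexHull ℝ B ∧ ∀ d ∈ B, d ∉ convexHull ℝ (B \ {d})

def InC {X : Type*} (S : Set (X →₀ ℝ)) : Prop :=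
  S.Nonempty ∧ (∀ d ∈ S, IsDist d) ∧
    ∃ F : Finset (X →₀ ℝ), S = convexHull ℝ (F : Set (X →₀ ℝ))

def IsDistC {X : Type*} (Φ : Set (X →₀ ℝ) →₀ ℝ) : Prop :=
  IsDist Φ ∧ ∀ U ∈ Φ.support, InC U

def InCC {X : Type*} (S : Set (Set (X →₀ ℝ) →₀ ℝ)) : Prop :=
  S.Nonempty ∧ (∀ Φ ∈ S, IsDistC Φ) ∧
    ∃ F : Finset (Set (X →₀ ℝ) →₀ ℝ), S = convexHull ℝ (F : Set (Set (X →₀ ℝ) →₀ ℝ))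

def mu {X : Type*} (S : Set (Set (X →₀ ℝ) →₀ ℝ)) : Set (X →₀ ℝ) :=
  ⋃ Φ ∈ S, {d | ∃ g : Set (X →₀ ℝ) → (X →₀ ℝ),
    (∀ U ∈ Φ.support, g U ∈ U) ∧ d = ∑ U ∈ Φ.support, Φ U • g U}

/-!
The fibre of `μ` over `Φ` is the Minkowski sum `∑ U, Φ U • U`. Taking convex hulls commutes with
such sums, so the fibre over `Φ` is the convex hull of `∑ U, Φ U • UB(U)`; and for convex `U` the
sum is affine in `Φ`, so `μ(S)` is convex. Finally, for a fixed selection `g`, the map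
`Φ ↦ ∑ U, Φ U • g U` is linear, so an element of `μ(S)` over `Φ ∈ conv UB(S)` is a convex
combination of its images over the base points.
-/

open Finset Pointwise

theorem exists_extend_selection {ι E : Type*} (g : ι → E) (c : ι → Set E) :
    ∃ g' : ι → E, (∀ i, g i ∈ c i → g' i = g i) ∧ ∀ i, (c i).Nonempty → g' i ∈ c i := by
  have h : ∀ i, ∃ x, (g i ∈ c i → x = g i) ∧ ((c i).Nonempty → x ∈ c i) := fun i => by
    by_cases hi : g i ∈ c i
    · exact ⟨g i, fun _ => rfl, fun _ => hi⟩
    by_cases hne : (c i).Nonempty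
    · exact ⟨hne.some, fun h => absurd h hi, fun _ => hne.some_mem⟩
    · exact ⟨g i, fun _ => rfl, fun h => absurd h hne⟩
  choose g' hg' using h
  exact ⟨g', fun i => (hg' i).1, fun i => (hg' i).2⟩

section Mixture

variable {ι E : Type*} [AddCommGroup E] [Module ℝ E]

def mixture (w : ι →₀ ℝ) (c : ι → Set E) : Set E :=
  {d | ∃ g : ι → E, (∀ i ∈ w.support, g i ∈ c i) ∧ d = ∑ i ∈ w.support, w i • g i}

theorem mixture_eq_sum (w : ι →₀ ℝ) (c : ι → Set E) :
    mixture w c = ∑ i ∈ w.support, w i • c i := by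
  ext d
  rw [Set.mem_finsetSum]
  constructor
  · rintro ⟨g, hg, rfl⟩
    exact ⟨fun i => w i • g i, fun hi => Set.smul_mem_smul_set (hg _ hi), rfl⟩
  · rintro ⟨f, hf, rfl⟩
    choose! g hg hgf using fun i (hi : i ∈ w.support) => Set.mem_smul_set.1 (hf hi)
    exact ⟨g, hg, sum_congr rfl fun i hi => (hgf i hi).symm⟩

theorem mixture_eq_sum_of_support_subset {w : ι →₀ ℝ} {c : ι → Set E} {F : Finset ι}
    (hF : w.support ⊆ F) (hc : ∀ i ∈ F, (c i).Nonempty) :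
    mixture w c = ∑ i ∈ F, w i • c i := by
  rw [mixture_eq_sum]
  refine sum_subset hF fun i hi hiw => ?_
  rw [Finsupp.notMem_support_iff.1 hiw, Set.zero_smul_set (hc i hi)]

theorem mixture_mono {w : ι →₀ ℝ} {c c' : ι → Set E} (h : ∀ i ∈ w.support, c i ⊆ c' i) :
    mixture w c ⊆ mixture w c' := by
  rintro _ ⟨g, hg, rfl⟩
  exact ⟨g, fun i hi => h i hi (hg i hi), rfl⟩

theorem mixture_convexHull (w : ι →₀ ℝ) (c : ι → Set E) :
    mixture w (fun i => convexHull ℝ (c i)) = convexHull ℝ (mixture w c) := by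
  simp only [mixture_eq_sum, convexHull_sum, convexHull_smul]

theorem linearCombination_mem_mixture {w : ι →₀ ℝ} {c : ι → Set E} {g : ι → E}
    (hg : ∀ i ∈ w.support, g i ∈ c i) : Finsupp.linearCombination ℝ g w ∈ mixture w c :=
  ⟨g, hg, Finsupp.linearCombination_apply ℝ w⟩

theorem smul_mixture_add_smul_mixture [DecidableEq ι] {v w : ι →₀ ℝ} (hv : ∀ i, 0 ≤ v i)
    (hw : ∀ i, 0 ≤ w i) {c : ι → Set E}
    (hc : ∀ i ∈ v.support ∪ w.support, Convex ℝ (c i) ∧ (c i).Nonempty)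
    {a b : ℝ} (ha : 0 ≤ a) (hb : 0 ≤ b) :
    a • mixture v c + b • mixture w c = mixture (a • v + b • w) c := by
  have hne i hi := (hc i hi).2
  have hsupp : (a • v + b • w).support ⊆ v.support ∪ w.support :=
    Finsupp.support_add.trans (union_subset_union Finsupp.support_smul Finsupp.support_smul)
  rw [mixture_eq_sum_of_support_subset subset_union_left hne,
    mixture_eq_sum_of_support_subset subset_union_right hne,
    mixture_eq_sum_of_support_subset hsupp hne, smul_sum, smul_sum, ← sum_add_distrib]
  refine sum_congr rfl fun i hi => ?_
  rw [smul_smul, smul_smul,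
    ← (hc i hi).1.add_smul (mul_nonneg ha (hv i)) (mul_nonneg hb (hw i))]
  simp

/-- After extending the selection off `Φ.support`, mixing it is linear in the weights, so it maps
`convexHull B` into the convex hull of the images of `B`. -/
theorem mixture_subset_convexHull_biUnion_mixture {Φ : ι →₀ ℝ} {B : Set (ι →₀ ℝ)}
    (hΦ : Φ ∈ convexHull ℝ B) {c b : ι → Set E}
    (hcb : ∀ Ψ ∈ B, ∀ i ∈ Ψ.support, (c i).Nonempty ∧ c i ⊆ convexHull ℝ (b i)) :
    mixture Φ c ⊆ convexHull ℝ (⋃ Ψ ∈ B, mixture Ψ b) := by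
  rintro _ ⟨g, hg, rfl⟩
  obtain ⟨g', hg'g, hg'c⟩ := exists_extend_selection g c
  have hsum : ∑ i ∈ Φ.support, Φ i • g i = Finsupp.linearCombination ℝ g' Φ := by
    rw [Finsupp.linearCombination_apply]
    exact sum_congr rfl fun i hi => by simp only [hg'g i (hg i hi)]
  have himage : Finsupp.linearCombination ℝ g' '' B ⊆ convexHull ℝ (⋃ Ψ ∈ B, mixture Ψ b) := by
    rintro _ ⟨Ψ, hΨ, rfl⟩
    have hmem := linearCombination_mem_mixture (c := fun i => convexHull ℝ (b i))
      fun i hi => (hcb Ψ hΨ i hi).2 (hg'c i (hcb Ψ hΨ i hi).1)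
    rw [mixture_convexHull] at hmem
    exact convexHull_mono (Set.subset_biUnion_of_mem hΨ) hmem
  rw [hsum]
  refine convexHull_min himage (convex_convexHull ℝ _) ?_
  rw [← LinearMap.image_convexHull]
  exact Set.mem_image_of_mem _ hΦ

end Mixture

theorem InC.convex {X : Type*} {U : Set (X →₀ ℝ)} (hU : InC U) : Convex ℝ U := by
  obtain ⟨-, -, F, rfl⟩ := hU
  exact convex_convexHull ℝ _

theorem mu_eq_biUnion_mixture {X : Type*} (S : Set (Set (X →₀ ℝ) →₀ ℝ)) :
    mu S = ⋃ Φ ∈ S, mixture Φ (fun U => U) :=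
  rfl

theorem convex_mu {X : Type*} {S : Set (Set (X →₀ ℝ) →₀ ℝ)} (hS : Convex ℝ S)
    (hdist : ∀ Φ ∈ S, IsDistC Φ) : Convex ℝ (mu S) := by
  classical
  intro x hx y hy a b ha hb _
  rw [mu_eq_biUnion_mixture, Set.mem_iUnion₂] at hx hy ⊢
  obtain ⟨Φ, hΦ, hx⟩ := hx
  obtain ⟨Ψ, hΨ, hy⟩ := hy
  have hc : ∀ U ∈ Φ.support ∪ Ψ.support, Convex ℝ U ∧ U.Nonempty := fun U hU => by
    have hC : InC U := (mem_union.1 hU).elim ((hdist Φ hΦ).2 U) ((hdist Ψ hΨ).2 U)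
    exact ⟨hC.convex, hC.1⟩
  refine ⟨a • Φ + b • Ψ, hS hΦ hΨ ha hb ‹_›, ?_⟩
  rw [← smul_mixture_add_smul_mixture (hdist Φ hΦ).1.1 (hdist Ψ hΨ).1.1 hc ha hb]
  exact Set.add_mem_add (Set.smul_mem_smul_set hx) (Set.smul_mem_smul_set hy)

/-- `μ(S)` is generated by combining the unique bases at both levels:
`μ(S) = conv(⋃_{Φ ∈ UB(S)} { Σ_U Φ(U)·d : d ∈ UB(U) })`. -/
theorem mu_via_bases {X : Type*} (S : Set (Set (X →₀ ℝ) →₀ ℝ)) (hS : InCC S)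
    (B : Set (Set (X →₀ ℝ) →₀ ℝ)) (hB : IsBase S B)
    (ub : Set (X →₀ ℝ) → Set (X →₀ ℝ)) (hub : ∀ U, InC U → IsBase U (ub U)) :
    mu S = convexHull ℝ {d | ∃ Φ ∈ B, ∃ g : Set (X →₀ ℝ) → (X →₀ ℝ),
      (∀ U ∈ Φ.support, g U ∈ ub U) ∧ d = ∑ U ∈ Φ.support, Φ U • g U} := by
  obtain ⟨-, hdist, -⟩ := hS
  obtain ⟨-, rfl, -⟩ := hB
  have hInC : ∀ Φ ∈ convexHull ℝ B, ∀ U ∈ Φ.support, InC U := fun Φ hΦ => (hdist Φ hΦ).2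
  have hT : {d | ∃ Φ ∈ B, ∃ g : Set (X →₀ ℝ) → (X →₀ ℝ),
      (∀ U ∈ Φ.support, g U ∈ ub U) ∧ d = ∑ U ∈ Φ.support, Φ U • g U}
        = ⋃ Φ ∈ B, mixture Φ ub := by
    ext d
    simp only [Set.mem_iUnion₂, exists_prop]
    rfl
  rw [hT, mu_eq_biUnion_mixture]
  apply subset_antisymm
  · refine Set.iUnion₂_subset fun Φ hΦ => mixture_subset_convexHull_biUnion_mixture hΦ ?_
    intro Ψ hΨ U hU
    have hU := hInC Ψ (subset_convexHull ℝ B hΨ) U hU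
    exact ⟨hU.1, (hub U hU).2.1.subset⟩
  · refine convexHull_min (Set.iUnion₂_subset fun Φ hΦ => ?_)
      (convex_mu (convex_convexHull ℝ B) hdist)
    have hΦS := subset_convexHull ℝ B hΦ
    refine (mixture_mono fun U hU => ?_).trans
      (Set.subset_biUnion_of_mem (u := fun Φ => mixture Φ fun U => U) hΦS)
    exact (subset_convexHull ℝ (ub U)).trans_eq (hub U (hInC Φ hΦS U hU)).2.1.symm
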